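/- Let B ⊂ ℤ be a finite set with N elements and 0 ∈ B, spectral with spectrum Λ ⊂ ℝ with 0 ∈ Λ, and suppose the Hadamard matrix associated to (B, Λ) is equivalent to the standard N×N Hadamard matrix. Then B = d B₀ where d is an integer and B₀ is a complete set of residues modulo N with gcd(B₀) = 1; and Λ = (1/R) f L₀ where f and R are integers, L₀ is a complete set of residues modulo N with gcd(L₀) = 1, and R = N S where S divides d f and d f / S is relatively prime to N. Conversely, for any such data, (1/R) f L₀ is a spectrum for d B₀. -/

import Mathlib

open Matrix

/-- The matrix `(1/√N)(e^{2πi b λ})_{b ∈ B, λ ∈ Λ}` associated to `(B, Λ)`. -/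
noncomputable def specMatrix (B : Finset ℤ) (Λ : Finset ℝ) : Matrix B Λ ℂ :=
  fun b l => ((1 / Real.sqrt B.card : ℝ) : ℂ) *
    Complex.exp (2 * (Real.pi : ℂ) * Complex.I * ((b : ℤ) : ℂ) * ((l : ℝ) : ℂ))

/-- `Λ` is a spectrum for the finite set `B`: the associated matrix is a (square) unitary
matrix. -/
def IsSpectrum (B : Finset ℤ) (Λ : Finset ℝ) : Prop :=
  B.card = Λ.card ∧
    specMatrix B Λ * (specMatrix B Λ)ᴴ = 1 ∧
    (specMatrix B Λ)ᴴ * specMatrix B Λ = 1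

/-- The standard `N × N` Hadamard matrix `(1/√N)(e^{2πi jk/N})`. -/
noncomputable def stdHadamard (N : ℕ) : Matrix (Fin N) (Fin N) ℂ :=
  fun j k => ((1 / Real.sqrt N : ℝ) : ℂ) *
    Complex.exp (2 * (Real.pi : ℂ) * Complex.I * (j : ℕ) * (k : ℕ) / (N : ℂ))

/-- `H` is equivalent to `H'`: after bijections of the index sets, the entries agree up to
multiplication of rows and columns by unimodular constants. -/
def EquivToStd {ι κ : Type*} [Fintype ι] [Fintype κ] (H : Matrix ι κ ℂ) {N : ℕ}
    (H' : Matrix (Fin N) (Fin N) ℂ) : Prop :=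
  ∃ (π : ι ≃ Fin N) (ρ : κ ≃ Fin N) (c : ι → ℂ) (d : κ → ℂ),
    (∀ i, ‖c i‖ = 1) ∧ (∀ j, ‖d j‖ = 1) ∧
    ∀ i j, H i j = c i * d j * H' (π i) (ρ j)

/-- `L` is a complete set of representatives modulo `R`. -/
def IsCompleteResidues (R : ℤ) (L : Finset ℤ) : Prop :=
  ∀ x : ℤ, ∃! l, l ∈ L ∧ l ≡ x [ZMOD R]

/-!
Dividing each entry by those in the row of `0 ∈ B` and the column of `0 ∈ Λ` removes the
unimodular factors of the equivalence, so `e^{2πi bλ} = e^{2πi J(b) K(λ) / N}` for bijections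
`J : B → ℤ/N` and `K : Λ → ℤ/N`: each `N b λ` is an integer congruent to `J(b) K(λ)` mod `N`.
For `d = gcd B`, Bézout makes `w(λ) = N d λ` an integer with `(b/d) w(λ) ≡ J(b) K(λ)`.
Evaluating at `b₁`, `λ₁` with `J(b₁) = K(λ₁) = 1` shows that `b/d` and `w` are injective mod `N`
and that `f = gcd w` is a unit mod `N`; so `B₀ = B/d` and `L₀ = w/f` work, with `S = d`.

Conversely, for `e = d f / S` one has `(d x)(f m / R) = e x m / N`. Since `e` is a unit mod `N`,
the rows of the matrix are distinct characters of `ℤ/N`, hence orthogonal.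
-/

open Finset Complex
open scoped Real

theorem isCompleteResidues_iff_bijOn {N : ℕ} {L : Finset ℤ} :
    IsCompleteResidues N L ↔ Set.BijOn (Int.cast : ℤ → ZMod N) L Set.univ := by
  simp only [IsCompleteResidues, ← ZMod.intCast_eq_intCast_iff]
  refine ⟨fun h => ⟨Set.mapsTo_univ _ _, fun a ha b hb hab => ?_, fun y _ => ?_⟩, fun h x => ?_⟩
  · exact (h b).unique ⟨ha, hab⟩ ⟨hb, rfl⟩
  · obtain ⟨x, rfl⟩ := ZMod.intCast_surjective y
    obtain ⟨l, hl, -⟩ := h x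
    exact ⟨l, hl.1, hl.2⟩
  · obtain ⟨l, hl, hlx⟩ := h.surjOn (Set.mem_univ (x : ZMod N))
    exact ⟨l, ⟨hl, hlx⟩, fun l' hl' => h.injOn hl'.1 hl (hl'.2.trans hlx.symm)⟩

namespace IsCompleteResidues

variable {N : ℕ} {L : Finset ℤ}

theorem card_eq [NeZero N] (hL : IsCompleteResidues N L) : L.card = N := by
  have h := isCompleteResidues_iff_bijOn.1 hL
  rw [card_nbij _ (fun _ _ => mem_univ _) h.injOn (by simpa using h.surjOn), card_univ,
    ZMod.card]

theorem eq_of_intCast_eq (hL : IsCompleteResidues N L) {a b : ℤ} (ha : a ∈ L) (hb : b ∈ L)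
    (hab : (a : ZMod N) = b) : a = b :=
  (isCompleteResidues_iff_bijOn.1 hL).injOn ha hb hab

theorem exists_intCast_eq (hL : IsCompleteResidues N L) (y : ZMod N) :
    ∃ a ∈ L, (a : ZMod N) = y :=
  (isCompleteResidues_iff_bijOn.1 hL).surjOn (Set.mem_univ y)

theorem sum_intCast [NeZero N] {M : Type*} [AddCommMonoid M] (hL : IsCompleteResidues N L)
    (g : ZMod N → M) : ∑ m ∈ L, g m = ∑ a, g a := by
  have h := isCompleteResidues_iff_bijOn.1 hL
  exact sum_nbij _ (fun _ _ => mem_univ _) h.injOn (by simpa using h.surjOn) fun _ _ => rfl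

end IsCompleteResidues

theorem isCompleteResidues_image {N : ℕ} [NeZero N] {ι : Type*} [DecidableEq ι]
    {s : Finset ι} (hs : s.card = N) {g : ι → ℤ} (hg : Set.InjOn (fun i => (g i : ZMod N)) s) :
    IsCompleteResidues N (s.image g) := by
  have hinj : Set.InjOn (Int.cast : ℤ → ZMod N) (s.image g) := by
    rintro _ ha _ hb hab
    obtain ⟨i, hi, rfl⟩ := mem_image.1 ha
    obtain ⟨j, hj, rfl⟩ := mem_image.1 hb
    rw [hg hi hj hab]
  have himage : (s.image g).image (Int.cast : ℤ → ZMod N) = univ := by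
    refine eq_univ_of_card _ ?_
    rw [card_image_of_injOn hinj, card_image_of_injOn (Set.InjOn.of_comp hg), hs, ZMod.card]
  refine isCompleteResidues_iff_bijOn.2 ⟨Set.mapsTo_univ _ _, hinj, fun y _ => ?_⟩
  have hy : y ∈ (s.image g).image (Int.cast : ℤ → ZMod N) := himage ▸ mem_univ y
  simpa using hy

theorem gcd_image_div_gcd_eq_one {ι : Type*} [DecidableEq ι] {s : Finset ι} {g : ι → ℤ}
    {i : ι} (hi : i ∈ s) (hg : g i ≠ 0) : (s.image fun i => g i / s.gcd g).gcd id = 1 := by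
  rw [gcd_image]
  exact gcd_div_eq_one hi hg

theorem image_mul_image_div_gcd (s : Finset ℤ) :
    (s.image fun b => b / s.gcd id).image (fun b => s.gcd id * b) = s := by
  rw [image_image]
  calc _ = s.image id := image_congr fun b hb => Int.mul_ediv_cancel' (gcd_dvd hb)
    _ = s := image_id

theorem image_gcd_mul_div_image_div_gcd {Λ : Finset ℝ} {w : Λ → ℤ} {c : ℤ} (hc : c ≠ 0)
    (hw : ∀ l : Λ, (c : ℝ) * l = w l) :
    (univ.image fun l => w l / univ.gcd w).image (fun m => ((univ.gcd w * m : ℤ) : ℝ) / c) =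
      Λ := by
  rw [image_image]
  calc _ = univ.image Subtype.val := image_congr fun l _ => by
        rw [Function.comp_apply, Int.mul_ediv_cancel' (gcd_dvd (mem_univ l)),
          div_eq_iff (Int.cast_ne_zero.2 hc), ← hw, mul_comm]
    _ = Λ := by rw [univ_eq_attach, attach_image_val]

theorem Int.gcd_natCast_eq_one_of_isUnit {N : ℕ} {f : ℤ} (h : IsUnit (f : ZMod N)) :
    Int.gcd f N = 1 := by
  rwa [Int.gcd_comm, ← Int.isCoprime_iff_gcd_eq_one, ← ZMod.coe_int_isUnit_iff_isCoprime]

theorem cexp_two_pi_I_intCast_div_eq_stdAddChar {N : ℕ} [NeZero N] (k : ℤ) :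
    exp (2 * π * I * ((k / N : ℝ) : ℂ)) = ZMod.stdAddChar (k : ZMod N) := by
  rw [ZMod.stdAddChar_coe]
  push_cast
  ring_nf

theorem specMatrix_apply (B : Finset ℤ) (Λ : Finset ℝ) (b : B) (l : Λ) :
    specMatrix B Λ b l =
      ((1 / √B.card : ℝ) : ℂ) * exp (2 * π * I * (((b : ℤ) * l : ℝ) : ℂ)) := by
  simp only [specMatrix]
  push_cast
  ring_nf

theorem specMatrix_mul_conjTranspose_apply (B : Finset ℤ) (Λ : Finset ℝ) (b b' : B) :
    (specMatrix B Λ * (specMatrix B Λ)ᴴ) b b' =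
      (B.card : ℂ)⁻¹ * ∑ l ∈ Λ, exp (2 * π * I * (((b - b' : ℤ) * l : ℝ) : ℂ)) := by
  simp only [Matrix.mul_apply, Matrix.conjTranspose_apply, specMatrix, star_mul',
    Complex.star_def, ← exp_conj, conj_ofReal]
  rw [mul_sum, ← sum_coe_sort Λ]
  refine sum_congr rfl fun l _ => ?_
  rw [mul_mul_mul_comm, ← exp_add, ← ofReal_mul, one_div, ← mul_inv,
    Real.mul_self_sqrt (Nat.cast_nonneg _)]
  simp only [map_mul, conj_ofReal, conj_I, map_ofNat, map_intCast]
  push_cast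
  ring_nf

theorem isSpectrum_of_sum_exp_eq_zero {B : Finset ℤ} {Λ : Finset ℝ} (hcard : B.card = Λ.card)
    (horth : ∀ b ∈ B, ∀ b' ∈ B, b ≠ b' →
      ∑ l ∈ Λ, exp (2 * π * I * (((b - b' : ℤ) * l : ℝ) : ℂ)) = 0) :
    IsSpectrum B Λ := by
  have hunit : specMatrix B Λ * (specMatrix B Λ)ᴴ = 1 := by
    ext b b'
    rw [specMatrix_mul_conjTranspose_apply, Matrix.one_apply]
    split_ifs with h
    · have hΛ : (Λ.card : ℂ) ≠ 0 := by exact_mod_cast (hcard ▸ card_pos.2 ⟨b.1, b.2⟩).ne'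
      simp [h, hcard, hΛ]
    · rw [horth b b.2 b' b'.2 (Subtype.coe_injective.ne h), mul_zero]
  exact ⟨hcard, hunit, (Matrix.mul_eq_one_comm_of_equiv
    (Fintype.equivOfCardEq (by simpa using hcard))).1 hunit⟩

section Converse

variable {N : ℕ} [NeZero N]

theorem intCast_mul_intCast_div_eq {d f R S : ℤ} (hR : R = N * S) (hS : S ∣ d * f)
    (x m : ℤ) :
    ((d * x : ℤ) : ℝ) * (((f * m : ℤ) : ℝ) / R) = ((d * f / S * x * m : ℤ) : ℝ) / N := by
  rcases eq_or_ne S 0 with rfl | hS0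
  · -- both sides vanish: `R = 0` and `d * f / 0 = 0`
    simp [hR]
  have hdf : (d : ℝ) * f = S * (d * f / S : ℤ) := by exact_mod_cast (Int.mul_ediv_cancel' hS).symm
  have hS0' : (S : ℝ) ≠ 0 := by exact_mod_cast hS0
  have hN0 : (N : ℝ) ≠ 0 := Nat.cast_ne_zero.2 (NeZero.ne N)
  rw [hR]
  push_cast
  field_simp
  linear_combination (x * m : ℝ) * hdf

theorem injOn_of_mul_eq_intCast_div {B₀ L₀ : Finset ℤ} (hB₀ : IsCompleteResidues N B₀)
    (hL₀ : IsCompleteResidues N L₀) {e : ℤ} (he : IsUnit (e : ZMod N)) {β φ : ℤ → ℝ}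
    (h : ∀ x m, β x * φ m = ((e * x * m : ℤ) : ℝ) / N) : Set.InjOn β B₀ ∧ Set.InjOn φ L₀ := by
  have hcast : ∀ {x m x' m' : ℤ}, β x * φ m = β x' * φ m' →
      (e * x * m : ZMod N) = e * x' * m' := by
    intro x m x' m' hxm
    rw [h, h, div_left_inj' (Nat.cast_ne_zero.2 (NeZero.ne N)), Int.cast_inj] at hxm
    exact_mod_cast congrArg (Int.cast : ℤ → ZMod N) hxm
  obtain ⟨x₁, -, hx₁⟩ := hB₀.exists_intCast_eq 1
  obtain ⟨m₁, -, hm₁⟩ := hL₀.exists_intCast_eq 1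
  refine ⟨fun x hx x' hx' hxx' => ?_, fun m hm m' hm' hmm' => ?_⟩
  · have := hcast (x := x) (x' := x') (m := m₁) (m' := m₁) (by rw [hxx'])
    simp only [hm₁, mul_one] at this
    exact hB₀.eq_of_intCast_eq hx hx' (he.mul_left_cancel this)
  · have := hcast (x := x₁) (x' := x₁) (m := m) (m' := m') (by rw [hmm'])
    simp only [hx₁, mul_one] at this
    exact hL₀.eq_of_intCast_eq hm hm' (he.mul_left_cancel this)

theorem isSpectrum_image_mul_image_div {d f R S : ℤ} {B₀ L₀ : Finset ℤ}
    (hB₀ : IsCompleteResidues N B₀) (hL₀ : IsCompleteResidues N L₀) (hR : R = N * S)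
    (hS : S ∣ d * f) (hcop : Int.gcd (d * f / S) N = 1) :
    IsSpectrum (B₀.image (fun b => d * b))
      (L₀.image (fun m => ((f * m : ℤ) : ℝ) / (R : ℝ))) := by
  set e := d * f / S
  set φ : ℤ → ℝ := fun m => ((f * m : ℤ) : ℝ) / (R : ℝ)
  have he : IsUnit (e : ZMod N) := (ZMod.coe_int_isUnit_iff_isCoprime _ _).2
    (Int.isCoprime_iff_gcd_eq_one.2 (by rwa [Int.gcd_comm]))
  have hphase := intCast_mul_intCast_div_eq hR hS
  obtain ⟨hdinj, hφinj⟩ := injOn_of_mul_eq_intCast_div hB₀ hL₀ he hphase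
  refine isSpectrum_of_sum_exp_eq_zero ?_ ?_
  · rw [card_image_of_injOn (Set.InjOn.of_comp hdinj), card_image_of_injOn hφinj,
      hB₀.card_eq, hL₀.card_eq]
  rintro _ hb _ hb' hbb'
  obtain ⟨x, hx, rfl⟩ := mem_image.1 hb
  obtain ⟨x', hx', rfl⟩ := mem_image.1 hb'
  set c : ZMod N := e * ((x : ZMod N) - x')
  have hc : c ≠ 0 := by
    rw [Ne, he.mul_right_eq_zero, sub_eq_zero]
    exact fun h => hbb' (by rw [hB₀.eq_of_intCast_eq hx hx' h])
  calc ∑ l ∈ L₀.image φ, exp (2 * π * I * (((d * x - d * x' : ℤ) * l : ℝ) : ℂ))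
      = ∑ m ∈ L₀, ZMod.stdAddChar ((m : ZMod N) * c) := by
        rw [sum_image hφinj]
        refine sum_congr rfl fun m _ => ?_
        rw [← mul_sub, hphase, cexp_two_pi_I_intCast_div_eq_stdAddChar]
        simp only [c, e]
        push_cast
        ring_nf
    _ = 0 := by
        rw [hL₀.sum_intCast (fun a => ZMod.stdAddChar (a * c)),
          AddChar.sum_mulShift _ (ZMod.isPrimitive_stdAddChar N), if_neg hc, Nat.cast_zero]

end Converse

theorem ZMod.finEquiv_apply {N : ℕ} [NeZero N] (j : Fin N) :
    ZMod.finEquiv N j = ((j : ℕ) : ZMod N) := by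
  obtain ⟨n, rfl⟩ := Nat.exists_eq_succ_of_ne_zero (NeZero.ne N)
  exact (Fin.cast_val_eq_self j).symm

theorem stdHadamard_apply_eq_stdAddChar {N : ℕ} [NeZero N] (j k : Fin N) :
    stdHadamard N j k =
      ((1 / √N : ℝ) : ℂ) * ZMod.stdAddChar (ZMod.finEquiv N j * ZMod.finEquiv N k) := by
  rw [ZMod.finEquiv_apply, ZMod.finEquiv_apply, ← Nat.cast_mul, ZMod.stdAddChar_apply,
    ZMod.toCircle_natCast, stdHadamard]
  push_cast
  ring_nf

theorem EquivToStd.exists_exp_eq_stdAddChar {N : ℕ} [NeZero N] {B : Finset ℤ} {Λ : Finset ℝ}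
    (hB : B.card = N) (h0B : 0 ∈ B) (h0Λ : 0 ∈ Λ)
    (h : EquivToStd (specMatrix B Λ) (stdHadamard N)) :
    ∃ (J : B ≃ ZMod N) (K : Λ ≃ ZMod N), ∀ (b : B) (l : Λ),
      exp (2 * π * I * (((b : ℤ) * l : ℝ) : ℂ)) = ZMod.stdAddChar (J b * K l) := by
  obtain ⟨σ, ρ, c, d, -, -, hH⟩ := h
  set ψ : AddChar (ZMod N) ℂ := ZMod.stdAddChar
  set ι : Fin N ≃ ZMod N := (ZMod.finEquiv N).toEquiv
  set b₀ : B := ⟨0, h0B⟩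
  set l₀ : Λ := ⟨0, h0Λ⟩
  set E : B → Λ → ℂ := fun b l => exp (2 * π * I * (((b : ℤ) * l : ℝ) : ℂ))
  set G : B → Λ → ℂ := fun b l => ψ (ι (σ b) * ι (ρ l))
  have hs : ((1 / √N : ℝ) : ℂ) ≠ 0 := by
    have : 0 < √(N : ℝ) := Real.sqrt_pos.2 (Nat.cast_pos.2 (Nat.pos_of_neZero N))
    exact_mod_cast (one_div_pos.2 this).ne'
  have hEG : ∀ b l, E b l = c b * d l * G b l := fun b l => mul_left_cancel₀ hs <| by
    have h := hH b l
    rw [specMatrix_apply, stdHadamard_apply_eq_stdAddChar, hB] at h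
    exact h.trans (mul_left_comm _ _ _)
  -- the unknown factors `c` and `d` cancel from these products over a rectangle of entries
  have hrect : ∀ b l, E b l * E b₀ l₀ * (G b l₀ * G b₀ l) = G b l * G b₀ l₀ * (E b l₀ * E b₀ l) :=
    fun b l => by simp only [hEG]; ring
  have hE0 : ∀ (b : B) (l : Λ), (b : ℤ) = 0 ∨ (l : ℝ) = 0 → E b l = 1 := by
    rintro b l (h | h) <;> simp [E, h]
  refine ⟨σ.trans (ι.trans (Equiv.subRight (ι (σ b₀)))),
    ρ.trans (ι.trans (Equiv.subRight (ι (ρ l₀)))), fun b l => ?_⟩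
  have h := hrect b l
  rw [hE0 b₀ l₀ (.inl rfl), hE0 b l₀ (.inr rfl), hE0 b₀ l (.inl rfl)] at h
  simp only [mul_one] at h
  refine mul_right_cancel₀ (mul_ne_zero (ψ.val_isUnit _).ne_zero (ψ.val_isUnit _).ne_zero)
    (h.trans ?_)
  simp only [G, ← AddChar.map_add_eq_mul, Equiv.trans_apply, Equiv.subRight_apply]
  congr 1
  ring

theorem exists_mul_eq_intCast_of_exp_eq_stdAddChar {N : ℕ} [NeZero N] {x : ℝ} {a : ZMod N}
    (h : exp (2 * π * I * (x : ℂ)) = ZMod.stdAddChar a) :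
    ∃ n : ℤ, (N : ℝ) * x = n ∧ (n : ZMod N) = a := by
  obtain ⟨k, rfl⟩ := ZMod.intCast_surjective a
  rw [ZMod.stdAddChar_coe, exp_eq_exp_iff_exists_int] at h
  obtain ⟨n, hn⟩ := h
  have hN : (N : ℂ) ≠ 0 := Nat.cast_ne_zero.2 (NeZero.ne N)
  have hπ : (2 * π * I : ℂ) ≠ 0 := by simp [Real.pi_ne_zero, I_ne_zero]
  refine ⟨k + N * n, Complex.ofReal_injective ?_, by simp⟩
  push_cast
  apply mul_left_cancel₀ hπ
  rw [mul_left_comm, hn]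
  field_simp

theorem exists_gcd_mul_eq_intCast {B : Finset ℤ} {x : ℝ} (h : ∀ b ∈ B, ∃ n : ℤ, b * x = n) :
    ∃ n : ℤ, ((B.gcd id : ℤ) : ℝ) * x = n := by
  choose! n hn using h
  obtain ⟨g, hg⟩ := B.gcd_eq_sum_mul id
  refine ⟨∑ b ∈ B, n b * g b, ?_⟩
  rw [hg]
  push_cast
  rw [sum_mul]
  refine sum_congr rfl fun b hb => ?_
  rw [← hn b hb, id]
  ring

theorem exists_intCast_eq_gcd_mul {N : ℕ} {B : Finset ℤ} {Λ : Finset ℝ} (P : B → Λ → ZMod N)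
    (h : ∀ (b : B) (l : Λ), ∃ n : ℤ, (N : ℝ) * ((b : ℤ) * l) = n ∧ (n : ZMod N) = P b l) :
    ∃ w : Λ → ℤ, (∀ l : Λ, ((B.gcd id : ℤ) : ℝ) * (N * l) = w l) ∧
      ∀ (b : B) (l : Λ), (((b : ℤ) / B.gcd id : ℤ) : ZMod N) * w l = P b l := by
  have hw : ∀ l : Λ, ∃ w : ℤ, ((B.gcd id : ℤ) : ℝ) * (N * l) = w := fun l =>
    exists_gcd_mul_eq_intCast fun b hb => by
      obtain ⟨n, hn, -⟩ := h ⟨b, hb⟩ l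
      exact ⟨n, by rw [← hn]; ring⟩
  choose w hw using hw
  refine ⟨w, hw, fun b l => ?_⟩
  obtain ⟨n, hn, hP⟩ := h b l
  have hb : ((B.gcd id * (b / B.gcd id) : ℤ) : ℝ) = b := by
    exact_mod_cast Int.mul_ediv_cancel' (gcd_dvd b.2)
  have : (b / B.gcd id : ℤ) * w l = n := by
    exact_mod_cast (show ((b / B.gcd id : ℤ) : ℝ) * w l = n by
      rw [← hw, ← hn, ← hb]; push_cast; ring)
  rw [← hP, ← this, Int.cast_mul]

def IsDilatedResiduePair (N : ℕ) (B : Finset ℤ) (Λ : Finset ℝ) : Prop :=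
  ∃ (d : ℤ) (B₀ : Finset ℤ), IsCompleteResidues (N : ℤ) B₀ ∧ B₀.gcd id = 1 ∧
    B = B₀.image (fun b => d * b) ∧
    ∃ (f R S : ℤ) (L₀ : Finset ℤ), IsCompleteResidues (N : ℤ) L₀ ∧ L₀.gcd id = 1 ∧
      Λ = L₀.image (fun m => ((f * m : ℤ) : ℝ) / (R : ℝ)) ∧
      R = (N : ℤ) * S ∧ S ∣ d * f ∧ Int.gcd (d * f / S) (N : ℤ) = 1

theorem isDilatedResiduePair_one_singleton_zero : IsDilatedResiduePair 1 {0} {0} := by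
  have h : IsCompleteResidues ((1 : ℕ) : ℤ) {1} := fun x =>
    ⟨1, ⟨mem_singleton_self 1, by simp [Int.modEq_one]⟩, fun y hy => mem_singleton.1 hy.1⟩
  exact ⟨0, {1}, h, by simp, by simp, 0, 1, 1, {1}, h, by simp, by simp, by simp, by simp,
    by simp⟩

theorem isDilatedResiduePair_of_intCast_eq_mul {N : ℕ} [Fact (1 < N)] {B : Finset ℤ}
    {Λ : Finset ℝ} (J : B ≃ ZMod N) (K : Λ ≃ ZMod N) {w : Λ → ℤ}
    (hw : ∀ l : Λ, ((B.gcd id : ℤ) : ℝ) * (N * l) = w l)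
    (hprod : ∀ (b : B) (l : Λ), (((b : ℤ) / B.gcd id : ℤ) : ZMod N) * w l = J b * K l) :
    IsDilatedResiduePair N B Λ := by
  set d := B.gcd id
  set b₁ := J.symm 1
  set l₁ := K.symm 1
  have hJ : ∀ b : B, J b = (((b : ℤ) / d : ℤ) : ZMod N) * w l₁ := fun b => by
    rw [hprod, K.apply_symm_apply, mul_one]
  have hK : ∀ l : Λ, K l = (((b₁ : ℤ) / d : ℤ) : ZMod N) * w l := fun l => by
    rw [hprod, J.apply_symm_apply, one_mul]
  have h1 : (((b₁ : ℤ) / d : ℤ) : ZMod N) * w l₁ = 1 := by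
    rw [hprod, J.apply_symm_apply, K.apply_symm_apply, mul_one]
  have hb₁ : (b₁ : ℤ) ≠ 0 := fun h0 => by simp [h0] at h1
  have hw₁ : w l₁ ≠ 0 := fun h0 => by simp [h0] at h1
  have hd : d ≠ 0 := fun h0 => hb₁ (gcd_eq_zero_iff.1 h0 _ b₁.2)
  have hB₀ : IsCompleteResidues N (B.image fun b => b / d) := by
    refine isCompleteResidues_image (by rw [← Fintype.card_coe, Fintype.card_congr J, ZMod.card])
      fun b hb b' hb' hbb' => Subtype.ext_iff.1 (J.injective (a₁ := ⟨b, hb⟩) (a₂ := ⟨b', hb'⟩) ?_)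
    rw [hJ, hJ]
    exact congrArg (· * _) hbb'
  set f := univ.gcd w
  have hf : ∀ l, f * (w l / f) = w l := fun l => Int.mul_ediv_cancel' (gcd_dvd (mem_univ l))
  have hL₀ : IsCompleteResidues N (univ.image fun l => w l / f) := by
    refine isCompleteResidues_image (by rw [card_univ, Fintype.card_congr K, ZMod.card])
      fun l _ l' _ hll' => K.injective ?_
    simp only at hll'
    rw [hK, hK, ← hf l, ← hf l', Int.cast_mul, Int.cast_mul, hll']
  refine ⟨d, _, hB₀, gcd_image_div_gcd_eq_one (g := id) b₁.2 hb₁, ?_, f, N * d, d, _, hL₀,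
    gcd_image_div_gcd_eq_one (mem_univ l₁) hw₁, ?_, rfl, dvd_mul_right d f, ?_⟩
  · exact (image_mul_image_div_gcd B).symm
  · refine (image_gcd_mul_div_image_div_gcd (mul_ne_zero (by exact_mod_cast NeZero.ne N) hd)
      fun l => ?_).symm
    rw [← hw]
    push_cast
    ring
  · rw [Int.mul_ediv_cancel_left _ hd]
    exact Int.gcd_natCast_eq_one_of_isUnit (isUnit_of_dvd_unit
      (map_dvd (Int.castRingHom (ZMod N)) (gcd_dvd (mem_univ l₁))) (.of_mul_eq_one_right _ h1))

theorem spectral_equiv_standard_classification_general (N : ℕ) (hN : 0 < N) (B : Finset ℤ)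
    (Λ : Finset ℝ) (hcardB : B.card = N) (hcardΛ : Λ.card = N) (h0B : (0 : ℤ) ∈ B)
    (h0Λ : (0 : ℝ) ∈ Λ)
    (hequiv : EquivToStd (specMatrix B Λ) (stdHadamard N)) :
    (∃ (d : ℤ) (B₀ : Finset ℤ), IsCompleteResidues (N : ℤ) B₀ ∧ B₀.gcd id = 1 ∧
      B = B₀.image (fun b => d * b) ∧
      ∃ (f R S : ℤ) (L₀ : Finset ℤ), IsCompleteResidues (N : ℤ) L₀ ∧ L₀.gcd id = 1 ∧
        Λ = L₀.image (fun m => ((f * m : ℤ) : ℝ) / (R : ℝ)) ∧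
        R = (N : ℤ) * S ∧ S ∣ d * f ∧ Int.gcd (d * f / S) (N : ℤ) = 1) ∧
    (∀ (d f R S : ℤ) (B₀ L₀ : Finset ℤ),
      IsCompleteResidues (N : ℤ) B₀ → B₀.gcd id = 1 →
      IsCompleteResidues (N : ℤ) L₀ → L₀.gcd id = 1 →
      R = (N : ℤ) * S → S ∣ d * f → Int.gcd (d * f / S) (N : ℤ) = 1 →
      IsSpectrum (B₀.image (fun b => d * b))
        (L₀.image (fun m => ((f * m : ℤ) : ℝ) / (R : ℝ)))) := by
  have : NeZero N := ⟨hN.ne'⟩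
  refine ⟨?_, fun d f R S B₀ L₀ hB₀ _ hL₀ _ hR hS hcop =>
    isSpectrum_image_mul_image_div hB₀ hL₀ hR hS hcop⟩
  by_cases hN1 : N = 1
  · subst hN1
    obtain ⟨b, rfl⟩ := card_eq_one.1 hcardB
    obtain ⟨l, rfl⟩ := card_eq_one.1 hcardΛ
    obtain rfl := mem_singleton.1 h0B
    obtain rfl := mem_singleton.1 h0Λ
    exact isDilatedResiduePair_one_singleton_zero
  have : Fact (1 < N) := ⟨by omega⟩
  obtain ⟨J, K, hJK⟩ := hequiv.exists_exp_eq_stdAddChar hcardB h0B h0Λ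
  obtain ⟨w, hw, hprod⟩ := exists_intCast_eq_gcd_mul (fun b l => J b * K l) fun b l =>
    exists_mul_eq_intCast_of_exp_eq_stdAddChar (hJK b l)
  exact isDilatedResiduePair_of_intCast_eq_mul J K hw hprod

/-- A spectral set `B ⊂ ℤ` of size `N` (with `0 ∈ B`), whose spectrum `Λ`
(with `0 ∈ Λ`) has associated Hadamard matrix equivalent to the standard `N × N` one,
has the form `B = d B₀` with `B₀` a complete set of residues mod `N` with `gcd B₀ = 1`;
and `Λ = (f/R) L₀` with `L₀` a complete set of residues mod `N` with `gcd L₀ = 1`,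
`R = N S`, `S ∣ d f` and `d f / S` prime to `N`. Conversely any such data yields a spectral
pair. -/
theorem spectral_equiv_standard_classification (N : ℕ) (hN : 0 < N) (B : Finset ℤ)
    (Λ : Finset ℝ) (hcardB : B.card = N) (hcardΛ : Λ.card = N) (h0B : (0 : ℤ) ∈ B)
    (h0Λ : (0 : ℝ) ∈ Λ) (hspec : IsSpectrum B Λ)
    (hequiv : EquivToStd (specMatrix B Λ) (stdHadamard N)) :
    (∃ (d : ℤ) (B₀ : Finset ℤ), IsCompleteResidues (N : ℤ) B₀ ∧ B₀.gcd id = 1 ∧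
      B = B₀.image (fun b => d * b) ∧
      ∃ (f R S : ℤ) (L₀ : Finset ℤ), IsCompleteResidues (N : ℤ) L₀ ∧ L₀.gcd id = 1 ∧
        Λ = L₀.image (fun m => ((f * m : ℤ) : ℝ) / (R : ℝ)) ∧
        R = (N : ℤ) * S ∧ S ∣ d * f ∧ Int.gcd (d * f / S) (N : ℤ) = 1) ∧
    (∀ (d f R S : ℤ) (B₀ L₀ : Finset ℤ),
      IsCompleteResidues (N : ℤ) B₀ → B₀.gcd id = 1 →
      IsCompleteResidues (N : ℤ) L₀ → L₀.gcd id = 1 →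
      R = (N : ℤ) * S → S ∣ d * f → Int.gcd (d * f / S) (N : ℤ) = 1 →
      IsSpectrum (B₀.image (fun b => d * b))
        (L₀.image (fun m => ((f * m : ℤ) : ℝ) / (R : ℝ)))) :=
  spectral_equiv_standard_classification_general N hN B Λ hcardB hcardΛ h0B h0Λ hequiv
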